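/- arXiv:2502.07062 — 4 statements merged into one kernel-verified Lean document; each statement's English description precedes it below -/
import Mathlib

section
/- Let f: 2^U → ℝ≥0 be submodular with f(∅) ≥ 0, let A = {a_1, ..., a_m} with prefixes A_i = {a_1, ..., a_i}, and let B ⊆ A be a subset of size m − 1 maximizing ∑_{a_i ∈ B} (f(A_i) − f(A_{i−1})). Then f(B) ≥ (1 − 1/m)·f(A). -/
/-- If `B ⊆ A = {a₁,…,a_m}` has `m−1` elements and maximizes the sum of the
marginal gains `f(Aᵢ) − f(A_{i−1})` over indices with `aᵢ ∈ B`, then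
`f(B) ≥ (1 − 1/m)·f(A)`. -/
theorem stmt_3 {U : Type*} [DecidableEq U] [Fintype U]
    (f : Finset U → ℝ)
    (hsub : ∀ X Y : Finset U, f (X ∪ Y) + f (X ∩ Y) ≤ f X + f Y)
    (hnn : ∀ S : Finset U, 0 ≤ f S)
    (m : ℕ) (hm : 0 < m) (a : Fin m → U) (ha : Function.Injective a)
    (Ap : ℕ → Finset U)
    (hAp : ∀ i : ℕ, Ap i = (Finset.univ.filter fun j : Fin m => (j : ℕ) < i).image a)
    (B : Finset U) (hB : B ⊆ Ap m) (hBcard : B.card = m - 1)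
    (hmax : ∀ B' ⊆ Ap m, B'.card = m - 1 →
      (∑ i : Fin m, if a i ∈ B' then f (Ap ((i : ℕ) + 1)) - f (Ap (i : ℕ)) else 0) ≤
      (∑ i : Fin m, if a i ∈ B then f (Ap ((i : ℕ) + 1)) - f (Ap (i : ℕ)) else 0)) :
    (1 - 1 / (m : ℝ)) * f (Ap m) ≤ f B := by
  set g : Fin m → ℝ := fun i => f (Ap ((i : ℕ) + 1)) - f (Ap (i : ℕ)) with hg
  have hmem : ∀ (x : U) (n : ℕ), x ∈ Ap n ↔ ∃ j : Fin m, (j : ℕ) < n ∧ a j = x := by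
    intro x n
    rw [hAp]
    simp [Finset.mem_image]
  have hApm : Ap m = Finset.univ.image a := by
    rw [hAp]
    congr 1
    ext j
    simp [j.isLt]
  have hcardA : (Ap m).card = m := by
    rw [hApm, Finset.card_image_of_injective _ ha, Finset.card_univ, Fintype.card_fin]
  -- find the missing element
  have hdiff : (Ap m \ B).card = 1 := by
    rw [Finset.card_sdiff_of_subset hB, hcardA, hBcard]; omega
  obtain ⟨x, hx⟩ := Finset.card_eq_one.mp hdiff
  have hxA : x ∈ Ap m := by
    have hxs : x ∈ Ap m \ B := hx ▸ Finset.mem_singleton_self x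
    exact (Finset.mem_sdiff.mp hxs).1
  obtain ⟨k, hk⟩ : ∃ k : Fin m, a k = x := by
    rw [hApm] at hxA
    obtain ⟨k, _, hk⟩ := Finset.mem_image.mp hxA
    exact ⟨k, hk⟩
  have hBeq : B = Ap m \ {a k} := by
    rw [hk, ← hx]; exact (Finset.sdiff_sdiff_eq_self hB).symm
  have hmemA : ∀ i : Fin m, a i ∈ Ap m := fun i => by
    rw [hApm]; exact Finset.mem_image_of_mem a (Finset.mem_univ i)
  -- card of Ap m \ {a k'}
  have hcard' : ∀ k' : Fin m, (Ap m \ {a k'}).card = m - 1 := fun k' => by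
    rw [Finset.card_sdiff_of_subset (Finset.singleton_subset_iff.mpr (hmemA k')), hcardA,
      Finset.card_singleton]
  -- sum over Ap m \ {a k'}
  have hsum : ∀ k' : Fin m,
      (∑ i : Fin m, if a i ∈ Ap m \ {a k'} then g i else 0) = (∑ i : Fin m, g i) - g k' := by
    intro k'
    have h1 : ∀ i : Fin m, (if a i ∈ Ap m \ {a k'} then g i else 0)
        = g i - (if i = k' then g i else 0) := by
      intro i
      by_cases h : i = k'
      · simp [h]
      · have : a i ≠ a k' := fun hc => h (ha hc)
        simp [h, hmemA i, this]
    rw [Finset.sum_congr rfl (fun i _ => h1 i), Finset.sum_sub_distrib]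
    simp
  have hBsum : (∑ i : Fin m, if a i ∈ B then g i else 0) = (∑ i : Fin m, g i) - g k := by
    rw [hBeq]; exact hsum k
  -- k has minimal marginal
  have hkmin : ∀ k' : Fin m, g k ≤ g k' := by
    intro k'
    have := hmax (Ap m \ {a k'}) (Finset.sdiff_subset) (hcard' k')
    rw [hsum k', hBsum] at this
    linarith
  -- telescoping
  have hAp0 : Ap 0 = ∅ := by rw [hAp]; simp
  have htel : (∑ i : Fin m, g i) = f (Ap m) - f (Ap 0) := by
    rw [hg, Fin.sum_univ_eq_sum_range (fun i => f (Ap (i + 1)) - f (Ap i)) m]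
    exact Finset.sum_range_sub (fun i => f (Ap i)) m
  have hsumle : (∑ i : Fin m, g i) ≤ f (Ap m) := by
    rw [htel]
    have := hnn (Ap 0)
    linarith
  -- m * g k ≤ sum
  have hmgk : (m : ℝ) * g k ≤ ∑ i : Fin m, g i := by
    calc (m : ℝ) * g k = ∑ _i : Fin m, g k := by
          rw [Finset.sum_const, Finset.card_univ, Fintype.card_fin, nsmul_eq_mul]
      _ ≤ ∑ i : Fin m, g i := Finset.sum_le_sum (fun i _ => hkmin i)
  -- submodularity: f B ≥ f (Ap m) - g k
  have hcup : B ∪ Ap ((k : ℕ) + 1) = Ap m := by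
    rw [hBeq]
    ext y
    simp only [Finset.mem_union, Finset.mem_sdiff, Finset.mem_singleton, hmem]
    constructor
    · rintro (⟨⟨j, _, hj⟩, _⟩ | ⟨j, _, hj⟩) <;> exact ⟨j, j.isLt, hj⟩
    · rintro ⟨j, _, hj⟩
      by_cases hjk : j = k
      · right; exact ⟨j, by omega, hj⟩
      · left
        exact ⟨⟨j, j.isLt, hj⟩, fun hc => hjk (ha (hj.trans hc))⟩
  have hcap : B ∩ Ap ((k : ℕ) + 1) = Ap (k : ℕ) := by
    rw [hBeq]
    ext y
    simp only [Finset.mem_inter, Finset.mem_sdiff, Finset.mem_singleton, hmem]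
    constructor
    · rintro ⟨⟨⟨j, _, hj⟩, hne⟩, ⟨j', hj', hj'e⟩⟩
      refine ⟨j', ?_, hj'e⟩
      have : j' ≠ k := fun hc => hne (hc ▸ hj'e.symm ▸ rfl)
      have : (j' : ℕ) ≠ (k : ℕ) := fun hc => this (Fin.ext hc)
      omega
    · rintro ⟨j, hj, hje⟩
      have hjk : j ≠ k := fun hc => by omega
      exact ⟨⟨⟨j, j.isLt, hje⟩, fun hc => hjk (ha (hje.trans hc))⟩, ⟨j, by omega, hje⟩⟩
  have hsubm := hsub B (Ap ((k : ℕ) + 1))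
  rw [hcup, hcap] at hsubm
  have hfB : f (Ap m) - g k ≤ f B := by
    rw [hg]; dsimp only; linarith
  -- conclude
  have hmR : (0 : ℝ) < m := by exact_mod_cast hm
  have hgk : g k ≤ f (Ap m) / m := by
    rw [le_div_iff₀ hmR, mul_comm]
    linarith
  have : (1 - 1 / (m : ℝ)) * f (Ap m) = f (Ap m) - f (Ap m) / m := by ring
  rw [this]
  linarith
end

section
/- Let f: 2^U → ℝ≥0 be submodular and nonnegative, and for a positive integer k let O_k denote a set maximizing f among subsets of U of size at most k. Then for positive integers k_1 ≤ k_2, f(O_{k_1}) ≥ (k_1/k_2)·f(O_{k_2}). -/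
/-!
Let `n = |O₂| > k₁` (otherwise `f O₂ ≤ f O₁` directly) and let `Σ_j` be the sum of `f` over the
`j`-subsets of `O₂`. Telescoping submodularity along the deletion of the elements of `S` gives
`∑_{a ∈ S} f(S \ a) ≥ (|S| - 1) f(S)`; summing over `|S| = j + 1` and double counting the pairs
`R ⊂ S` with `|S \ R| = 1` yields `j Σ_{j+1} ≤ (n - j) Σ_j`. As `(j + 1) C(n, j+1) = (n - j) C(n, j)`,
the ratio `Σ_j / (j C(n, j))` decreases as `j` grows, reaching `f(O₂) / n` at `j = n`. Since every
`k₁`-subset has value at most `f(O₁)`, this gives `k₁ f(O₂) ≤ n f(O₁) ≤ k₂ f(O₁)`.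
-/

open Finset

def IsSubmodular {α : Type*} [DecidableEq α] (f : Finset α → ℝ) : Prop :=
  ∀ X Y : Finset α, f (X ∪ Y) + f (X ∩ Y) ≤ f X + f Y

theorem sum_powersetCard_succ_sum_erase {α M : Type*} [DecidableEq α] [AddCommMonoid M]
    (g : Finset α → M) (T : Finset α) (j : ℕ) :
    ∑ S ∈ T.powersetCard (j + 1), ∑ a ∈ S, g (S.erase a) =
      (T.card - j) • ∑ R ∈ T.powersetCard j, g R := by
  have hcount : ∀ R ∈ T.powersetCard j, (T.card - j) • g R = ∑ _a ∈ T \ R, g R := by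
    intro R hR
    obtain ⟨hRT, hRcard⟩ := mem_powersetCard.mp hR
    rw [sum_const, card_sdiff_of_subset hRT, hRcard]
  rw [smul_sum, sum_congr rfl hcount, sum_sigma', sum_sigma']
  refine sum_nbij' (fun p => ⟨p.1.erase p.2, p.2⟩) (fun p => ⟨insert p.2 p.1, p.2⟩)
    ?_ ?_ ?_ ?_ fun _ _ => rfl
  · rintro ⟨S, a⟩ hp
    simp only [mem_sigma, mem_powersetCard] at hp ⊢
    obtain ⟨⟨hST, hScard⟩, haS⟩ := hp
    refine ⟨⟨(erase_subset _ _).trans hST, by simp [card_erase_of_mem haS, hScard]⟩, ?_⟩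
    simp [mem_sdiff, hST haS]
  · rintro ⟨R, a⟩ hp
    simp only [mem_sigma, mem_powersetCard, mem_sdiff] at hp ⊢
    obtain ⟨⟨hRT, hRcard⟩, haT, haR⟩ := hp
    exact ⟨⟨insert_subset haT hRT, by rw [card_insert_of_notMem haR, hRcard]⟩,
      mem_insert_self _ _⟩
  · rintro ⟨S, a⟩ hp
    simp [insert_erase (mem_sigma.mp hp).2]
  · rintro ⟨R, a⟩ hp
    simp [erase_insert (mem_sdiff.mp (mem_sigma.mp hp).2).2]

namespace IsSubmodular

variable {α : Type*} [DecidableEq α] {f : Finset α → ℝ}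

theorem insert_sub_le (hf : IsSubmodular f) {A B : Finset α} {x : α} (hAB : A ⊆ B)
    (hx : x ∉ B) :
    f (insert x B) - f B ≤ f (insert x A) - f A := by
  have h := hf (insert x A) B
  rw [insert_union, union_eq_right.mpr hAB, insert_inter_of_notMem hx,
    inter_eq_left.mpr hAB] at h
  linarith

theorem sum_sub_erase_le (hf : IsSubmodular f) (S : Finset α) :
    ∑ a ∈ S, (f S - f (S.erase a)) ≤ f S - f ∅ := by
  induction S using Finset.induction_on with
  | empty => simp
  | insert a S ha ih =>
    have marginal : ∀ x ∈ S,
        f (insert a S) - f ((insert a S).erase x) ≤ f S - f (S.erase x) := by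
      intro x hx
      have hxa : x ≠ a := ne_of_mem_of_not_mem hx ha
      have h := hf.insert_sub_le (subset_insert a (S.erase x)) (x := x)
        (by simp [hxa])
      rw [insert_comm, insert_erase hx] at h
      rwa [erase_insert_of_ne hxa.symm]
    rw [sum_insert ha, erase_insert ha]
    linarith [sum_le_sum marginal]

theorem card_sub_one_mul_le_sum_erase (hf : IsSubmodular f) (hf₀ : 0 ≤ f ∅) (S : Finset α) :
    ((S.card : ℝ) - 1) * f S ≤ ∑ a ∈ S, f (S.erase a) := by
  have h := hf.sum_sub_erase_le S
  rw [sum_sub_distrib, sum_const, nsmul_eq_mul] at h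
  linarith

theorem mul_sum_powersetCard_succ_le (hf : IsSubmodular f) (hf₀ : 0 ≤ f ∅)
    (T : Finset α) (j : ℕ) :
    (j : ℝ) * ∑ S ∈ T.powersetCard (j + 1), f S ≤
      ((T.card - j : ℕ) : ℝ) * ∑ R ∈ T.powersetCard j, f R := by
  calc (j : ℝ) * ∑ S ∈ T.powersetCard (j + 1), f S
      = ∑ S ∈ T.powersetCard (j + 1), ((S.card : ℝ) - 1) * f S := by
        rw [mul_sum]
        refine sum_congr rfl fun S hS => ?_
        rw [(mem_powersetCard.mp hS).2]
        push_cast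
        ring
    _ ≤ ∑ S ∈ T.powersetCard (j + 1), ∑ a ∈ S, f (S.erase a) :=
        sum_le_sum fun S _ => hf.card_sub_one_mul_le_sum_erase hf₀ S
    _ = ((T.card - j : ℕ) : ℝ) * ∑ R ∈ T.powersetCard j, f R := by
        rw [sum_powersetCard_succ_sum_erase, nsmul_eq_mul]

theorem mul_choose_mul_le_card_mul_sum_powersetCard (hf : IsSubmodular f) (hf₀ : 0 ≤ f ∅)
    {T : Finset α} {k : ℕ} (hk : k ≤ T.card) :
    (k : ℝ) * T.card.choose k * f T ≤ T.card * ∑ S ∈ T.powersetCard k, f S := by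
  induction hk using Nat.decreasingInduction with
  | self => simp [powersetCard_self]
  | of_succ j hj ih =>
    have hchoose : (T.card.choose (j + 1) : ℝ) * ((j : ℝ) + 1) =
        T.card.choose j * ((T.card - j : ℕ) : ℝ) := by
      exact_mod_cast Nat.choose_succ_right_eq T.card j
    have hpos : (0 : ℝ) < ((T.card - j : ℕ) : ℝ) := by
      exact_mod_cast Nat.sub_pos_of_lt hj
    push_cast at ih
    refine le_of_mul_le_mul_left ?_ hpos
    calc ((T.card - j : ℕ) : ℝ) * (j * T.card.choose j * f T)
        = j * ((j + 1) * T.card.choose (j + 1) * f T) := by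
          linear_combination (-(j : ℝ) * f T) * hchoose
      _ ≤ j * (T.card * ∑ S ∈ T.powersetCard (j + 1), f S) :=
          mul_le_mul_of_nonneg_left ih (Nat.cast_nonneg _)
      _ = T.card * (j * ∑ S ∈ T.powersetCard (j + 1), f S) := by ring
      _ ≤ T.card * (((T.card - j : ℕ) : ℝ) * ∑ R ∈ T.powersetCard j, f R) :=
          mul_le_mul_of_nonneg_left (hf.mul_sum_powersetCard_succ_le hf₀ T j) (Nat.cast_nonneg _)
      _ = ((T.card - j : ℕ) : ℝ) * (T.card * ∑ S ∈ T.powersetCard j, f S) := by ring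

theorem mul_le_card_mul_of_forall_powersetCard_le (hf : IsSubmodular f) (hf₀ : 0 ≤ f ∅)
    {T : Finset α} {k : ℕ} {M : ℝ} (hk : k ≤ T.card)
    (hM : ∀ S ∈ T.powersetCard k, f S ≤ M) :
    (k : ℝ) * f T ≤ T.card * M := by
  have hchoose : (0 : ℝ) < T.card.choose k := by exact_mod_cast Nat.choose_pos hk
  have hsum : ∑ S ∈ T.powersetCard k, f S ≤ T.card.choose k * M := by
    simpa [card_powersetCard] using sum_le_card_nsmul _ f M hM
  refine le_of_mul_le_mul_left ?_ hchoose
  calc (T.card.choose k : ℝ) * (k * f T)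
      = k * T.card.choose k * f T := by ring
    _ ≤ T.card * ∑ S ∈ T.powersetCard k, f S :=
        hf.mul_choose_mul_le_card_mul_sum_powersetCard hf₀ hk
    _ ≤ T.card * (T.card.choose k * M) := mul_le_mul_of_nonneg_left hsum (Nat.cast_nonneg _)
    _ = T.card.choose k * (T.card * M) := by ring

end IsSubmodular

theorem stmt_4_general {U : Type*} [DecidableEq U]
    (f : Finset U → ℝ)
    (hsub : ∀ X Y : Finset U, f (X ∪ Y) + f (X ∩ Y) ≤ f X + f Y)
    (hnn : ∀ S : Finset U, 0 ≤ f S)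
    (k₁ k₂ : ℕ) (hk : k₁ ≤ k₂)
    (O₁ O₂ : Finset U)
    (hO₁ : ∀ S : Finset U, S.card ≤ k₁ → f S ≤ f O₁)
    (hO₂c : O₂.card ≤ k₂) :
    ((k₁ : ℝ) / (k₂ : ℝ)) * f O₂ ≤ f O₁ := by
  have key : (k₁ : ℝ) * f O₂ ≤ k₂ * f O₁ := by
    rcases le_or_gt O₂.card k₁ with hsmall | hlarge
    · exact mul_le_mul (by exact_mod_cast hk) (hO₁ O₂ hsmall) (hnn O₂) (Nat.cast_nonneg _)
    · calc (k₁ : ℝ) * f O₂ ≤ O₂.card * f O₁ :=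
            IsSubmodular.mul_le_card_mul_of_forall_powersetCard_le hsub (hnn ∅) hlarge.le
              fun S hS => hO₁ S (mem_powersetCard.mp hS).2.le
        _ ≤ k₂ * f O₁ := by gcongr; exact hnn O₁
  rw [div_mul_eq_mul_div]
  exact div_le_of_le_mul₀ (Nat.cast_nonneg _) (hnn O₁) (by rwa [mul_comm (f O₁)])

/-- If `O₁` (resp. `O₂`) maximizes the nonnegative submodular `f` over sets of size
at most `k₁` (resp. `k₂`) and `0 < k₁ ≤ k₂`, then `f(O₁) ≥ (k₁/k₂)·f(O₂)`. -/
theorem stmt_4 {U : Type*} [DecidableEq U] [Fintype U]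
    (f : Finset U → ℝ)
    (hsub : ∀ X Y : Finset U, f (X ∪ Y) + f (X ∩ Y) ≤ f X + f Y)
    (hnn : ∀ S : Finset U, 0 ≤ f S)
    (k₁ k₂ : ℕ) (hk₁ : 0 < k₁) (hk : k₁ ≤ k₂)
    (O₁ O₂ : Finset U)
    (hO₁c : O₁.card ≤ k₁) (hO₁ : ∀ S : Finset U, S.card ≤ k₁ → f S ≤ f O₁)
    (hO₂c : O₂.card ≤ k₂) (hO₂ : ∀ S : Finset U, S.card ≤ k₂ → f S ≤ f O₂) :
    ((k₁ : ℝ) / (k₂ : ℝ)) * f O₂ ≤ f O₁ :=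
  stmt_4_general f hsub hnn k₁ k₂ hk O₁ O₂ hO₁ hO₂c
end

section
/- Suppose X_1, ..., X_n is a sequence of Bernoulli random variables where the conditional probability of success of X_i given any outcome of X_1, ..., X_{i−1} is at least η > 0. Let Y_1, ..., Y_n be independent Bernoulli trials each with success probability η. Then for any integer b, P(∑_{i=1}^n X_i ≤ b) ≤ P(∑_{i=1}^n Y_i ≤ b). -/
/-!
Let `F_m(b)` be the probability that at most `b` of the first `m` trials succeed. Splitting
according to the outcome of trial `m`, for the independent `Y` one has exactly
`F_{m+1}(b) = η F_m(b - 1) + (1 - η) F_m(b)`, while for `X` the conditional lower bound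
on successes, summed over the cylinders of the history, gives `≤` in place of `=`. The right-hand
side is monotone in `F_m`, so induction on `m` compares the two distribution functions.
-/

open MeasureTheory ProbabilityTheory Finset
open scoped ENNReal

section

variable {Ω α : Type*} [MeasurableSpace Ω] [MeasurableSpace α] [Countable α]
  [MeasurableSingletonClass α]

theorem mul_measure_preimage_le_measure_preimage_inter {μ : Measure Ω} {H : Ω → α}
    (hH : Measurable H) {A : Set Ω} {c : ℝ≥0∞}
    (hc : ∀ a, c * μ (H ⁻¹' {a}) ≤ μ (H ⁻¹' {a} ∩ A)) (Q : Set α) :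
    c * μ (H ⁻¹' Q) ≤ μ (H ⁻¹' Q ∩ A) := by
  have hfib : ∀ a ∈ Q, MeasurableSet (H ⁻¹' {a}) := fun a _ => hH (measurableSet_singleton a)
  rw [← Measure.restrict_apply (hH Q.to_countable.measurableSet),
    ← tsum_measure_preimage_singleton Q.to_countable hfib,
    ← tsum_measure_preimage_singleton Q.to_countable hfib, ← ENNReal.tsum_mul_left]
  exact ENNReal.tsum_le_tsum fun a => (hc a).trans_eq (Measure.restrict_apply (hfib a a.2)).symm

theorem measure_diff_le_one_sub_mul {μ : Measure Ω} [IsFiniteMeasure μ] {E T : Set Ω}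
    (hT : MeasurableSet T) {c : ℝ≥0∞} (h : c * μ E ≤ μ (E ∩ T)) :
    μ (E \ T) ≤ (1 - c) * μ E := by
  rw [ENNReal.eq_sub_of_add_eq (measure_ne_top μ _) ((add_comm _ _).trans
    (measure_inter_add_sdiff E hT)), ENNReal.sub_mul fun _ _ => measure_ne_top μ E, one_mul]
  exact tsub_le_tsub_left h _

end

lemma ENNReal.add_one_sub_mul_eq {η : ℝ≥0∞} (hη : η ≤ 1) (a e : ℝ≥0∞) :
    a + (1 - η) * e = η * a + (1 - η) * (a + e) := by
  rw [mul_add, ← add_assoc, ← add_mul, add_tsub_cancel_of_le hη, one_mul]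

section Successes

variable {Ω : Type*} {n : ℕ}

def successesBefore (Z : Fin n → Ω → Bool) (m : ℕ) (ω : Ω) : ℕ :=
  ∑ j ∈ univ.filter (fun j : Fin n => (j : ℕ) < m), (Z j ω).toNat

section Counting

variable (Z : Fin n → Ω → Bool) (ω : Ω)

@[simp]
lemma successesBefore_zero : successesBefore Z 0 ω = 0 := by
  simp [successesBefore]

lemma successesBefore_succ (i : Fin n) :
    successesBefore Z (i + 1) ω = successesBefore Z i ω + (Z i ω).toNat := by
  have hinsert : univ.filter (fun j : Fin n => (j : ℕ) < i + 1) =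
      insert i (univ.filter fun j : Fin n => (j : ℕ) < i) := by
    ext j; simp [le_iff_eq_or_lt, Fin.val_inj]
  rw [successesBefore, hinsert, sum_insert (by simp), add_comm]
  rfl

lemma successesBefore_self : successesBefore Z n ω = #{i | Z i ω = true} := by
  simp only [successesBefore, Fin.is_lt, card_filter]
  exact sum_congr (filter_true_of_mem fun _ _ => trivial) fun i _ => by cases Z i ω <;> rfl

end Counting

variable [MeasurableSpace Ω] {Z : Fin n → Ω → Bool}

-- `P(Z i = true | Z j = x j for all j < i) ≥ η`, with the denominator cleared.
def CondSuccessProbGE (μ : Measure Ω) (Z : Fin n → Ω → Bool) (η : ℝ≥0∞) (i : Fin n) : Prop :=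
  ∀ x : Fin n → Bool, 0 < μ {ω | ∀ j < i, Z j ω = x j} →
    η * μ {ω | ∀ j < i, Z j ω = x j} ≤ μ {ω | Z i ω = true ∧ ∀ j < i, Z j ω = x j}

lemma measurable_successesBefore (hZ : ∀ i, Measurable (Z i)) (m : ℕ) :
    Measurable (successesBefore Z m) := by
  unfold successesBefore
  fun_prop

lemma measurableSet_successesBefore (hZ : ∀ i, Measurable (Z i)) (m : ℕ) (p : ℕ → Prop) :
    MeasurableSet {ω | p (successesBefore Z m ω)} :=
  measurable_successesBefore hZ m .of_discrete

lemma measure_successesBefore_le_eq_add (μ : Measure Ω) (hZ : ∀ i, Measurable (Z i)) (m : ℕ)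
    (b : ℤ) :
    μ {ω | (successesBefore Z m ω : ℤ) ≤ b} =
      μ {ω | (successesBefore Z m ω : ℤ) ≤ b - 1} +
        μ {ω | (successesBefore Z m ω : ℤ) = b} := by
  have hsplit : {ω | (successesBefore Z m ω : ℤ) ≤ b} =
      {ω | (successesBefore Z m ω : ℤ) ≤ b - 1} ∪
        {ω | (successesBefore Z m ω : ℤ) = b} := by
    ext ω; simp only [Set.mem_ofPred_eq, Set.mem_union]; omega
  rw [hsplit]
  refine measure_union (Set.disjoint_left.mpr fun ω h₁ h₂ => ?_)
    (measurableSet_successesBefore hZ m (fun k => (k : ℤ) = b))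
  simp only [Set.mem_ofPred_eq] at h₁ h₂; omega

lemma measure_successesBefore_succ_le_eq_add (μ : Measure Ω) (hZ : ∀ i, Measurable (Z i))
    (i : Fin n) (b : ℤ) :
    μ {ω | (successesBefore Z (i + 1) ω : ℤ) ≤ b} =
      μ {ω | (successesBefore Z i ω : ℤ) ≤ b - 1} +
        μ ({ω | (successesBefore Z i ω : ℤ) = b} ∩ {ω | Z i ω = false}) := by
  have hsplit : {ω | (successesBefore Z (i + 1) ω : ℤ) ≤ b} =
      {ω | (successesBefore Z i ω : ℤ) ≤ b - 1} ∪
        ({ω | (successesBefore Z i ω : ℤ) = b} ∩ {ω | Z i ω = false}) := by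
    ext ω
    simp only [Set.mem_ofPred_eq, Set.mem_union, Set.mem_inter_iff, successesBefore_succ]
    cases Z i ω <;> simp; omega
  rw [hsplit]
  refine measure_union (Set.disjoint_left.mpr fun ω h₁ h₂ => ?_)
    ((measurableSet_successesBefore hZ i (fun k => (k : ℤ) = b)).inter
      (hZ i (measurableSet_singleton false)))
  simp only [Set.mem_ofPred_eq, Set.mem_inter_iff] at h₁ h₂; omega

lemma mul_measure_successesBefore_eq_le_inter_true (μ : Measure Ω) {η : ℝ≥0∞}
    (hZ : ∀ i, Measurable (Z i)) (i : Fin n)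
    (hcond : CondSuccessProbGE μ Z η i) (b : ℤ) :
    η * μ {ω | (successesBefore Z i ω : ℤ) = b} ≤
      μ ({ω | (successesBefore Z i ω : ℤ) = b} ∩ {ω | Z i ω = true}) := by
  set S := univ.filter fun j : Fin n => (j : ℕ) < i
  -- The event depends only on the history `H`, whose fibres are the cylinders of `hcond`.
  let H : Ω → S → Bool := fun ω => S.restrict (Z · ω)
  have hH : Measurable H := measurable_pi_lambda _ fun j => hZ j
  have hfiber : ∀ y, η * μ (H ⁻¹' {y}) ≤ μ (H ⁻¹' {y} ∩ {ω | Z i ω = true}) := by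
    intro y
    obtain ⟨x, rfl⟩ : ∃ x, S.restrict x = y :=
      ⟨fun j => if h : j ∈ S then y ⟨j, h⟩ else false, by funext j; simp⟩
    have hcyl : H ⁻¹' {S.restrict x} = {ω | ∀ j < i, Z j ω = x j} := by
      ext ω; simp [H, S, funext_iff]
    rw [hcyl]
    rcases eq_zero_or_pos (μ {ω | ∀ j < i, Z j ω = x j}) with h0 | hpos
    · simp [h0]
    · convert hcond x hpos using 2
      ext ω; simp [and_comm]
  have hevent : {ω | (successesBefore Z i ω : ℤ) = b} =
      H ⁻¹' {y | ((∑ j, (y j).toNat : ℕ) : ℤ) = b} := by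
    ext ω; simp only [H, Set.mem_ofPred_eq, Set.mem_preimage, successesBefore, Finset.restrict]
    rw [sum_coe_sort S fun j => (Z j ω).toNat]
  rw [hevent]
  exact mul_measure_preimage_le_measure_preimage_inter hH hfiber _

lemma indepFun_successesBefore {ν : Measure Ω} (hZ : ∀ i, Measurable (Z i))
    (hindep : iIndepFun Z ν) (i : Fin n) : IndepFun (successesBefore Z i) (Z i) ν := by
  have h := (hindep.comp (fun _ b => b.toNat) fun _ => .of_discrete).indepFun_finsetSum_of_notMem
    (fun j => Measurable.of_discrete.comp (hZ j)) (s := univ.filter fun j : Fin n => (j : ℕ) < i)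
    (i := i) (by simp)
  have hsum : ∑ j ∈ univ.filter (fun j : Fin n => (j : ℕ) < i), (fun b => b.toNat) ∘ Z j =
      successesBefore Z i := by
    funext ω; simp [successesBefore]
  have hZi : (fun k : ℕ => k == 1) ∘ (fun b => b.toNat) ∘ Z i = Z i := by
    funext ω; simp only [Function.comp_apply]; cases Z i ω <;> rfl
  simpa only [hsum, hZi, Function.id_comp] using
    h.comp measurable_id (Measurable.of_discrete (f := (· == 1)))

lemma measure_successesBefore_succ_le_le_of_condSuccessProbGE (μ : Measure Ω) [IsFiniteMeasure μ]
    {η : ℝ≥0∞} (hη : η ≤ 1) (hZ : ∀ i, Measurable (Z i)) (i : Fin n)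
    (hcond : CondSuccessProbGE μ Z η i) (b : ℤ) :
    μ {ω | (successesBefore Z (i + 1) ω : ℤ) ≤ b} ≤
      η * μ {ω | (successesBefore Z i ω : ℤ) ≤ b - 1} +
        (1 - η) * μ {ω | (successesBefore Z i ω : ℤ) ≤ b} := by
  have hfalse : {ω | (successesBefore Z i ω : ℤ) = b} ∩ {ω | Z i ω = false} =
      {ω | (successesBefore Z i ω : ℤ) = b} \ {ω | Z i ω = true} := by
    ext ω; simp
  rw [measure_successesBefore_succ_le_eq_add μ hZ i b, measure_successesBefore_le_eq_add μ hZ i b,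
    ← ENNReal.add_one_sub_mul_eq hη, hfalse]
  gcongr
  exact measure_diff_le_one_sub_mul (hZ i (measurableSet_singleton true))
    (mul_measure_successesBefore_eq_le_inter_true μ hZ i hcond b)

lemma measure_successesBefore_succ_le_of_iIndepFun (ν : Measure Ω) [IsProbabilityMeasure ν]
    {η : ℝ≥0∞} (hZ : ∀ i, Measurable (Z i)) (hindep : iIndepFun Z ν) (i : Fin n)
    (hbern : ν {ω | Z i ω = true} = η) (b : ℤ) :
    ν {ω | (successesBefore Z (i + 1) ω : ℤ) ≤ b} =
      η * ν {ω | (successesBefore Z i ω : ℤ) ≤ b - 1} +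
        (1 - η) * ν {ω | (successesBefore Z i ω : ℤ) ≤ b} := by
  have hfalse : ν {ω | Z i ω = false} = 1 - η := by
    rw [← hbern, ← prob_compl_eq_one_sub (s := {ω | Z i ω = true})
      (hZ i (measurableSet_singleton true))]
    congr; ext ω; simp
  have hindep_i : ν ({ω | (successesBefore Z i ω : ℤ) = b} ∩ {ω | Z i ω = false}) =
      ν {ω | (successesBefore Z i ω : ℤ) = b} * ν {ω | Z i ω = false} :=
    (indepFun_successesBefore hZ hindep i).measure_inter_preimage_eq_mul
      (s := {k : ℕ | (k : ℤ) = b}) (t := {false}) .of_discrete .of_discrete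
  rw [measure_successesBefore_succ_le_eq_add ν hZ i b, measure_successesBefore_le_eq_add ν hZ i b,
    ← ENNReal.add_one_sub_mul_eq (hbern ▸ prob_le_one), hindep_i, hfalse, mul_comm]

theorem measure_successesBefore_le_le_of_condSuccessProbGE {Ω' : Type*} [MeasurableSpace Ω']
    (μ : Measure Ω) (ν : Measure Ω') [IsProbabilityMeasure μ] [IsProbabilityMeasure ν]
    {η : ℝ≥0∞} {X : Fin n → Ω → Bool} (hX : ∀ i, Measurable (X i))
    (hcond : ∀ i, CondSuccessProbGE μ X η i)
    {Y : Fin n → Ω' → Bool} (hY : ∀ i, Measurable (Y i)) (hindep : iIndepFun Y ν)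
    (hbern : ∀ i, ν {ω | Y i ω = true} = η) {m : ℕ} (hm : m ≤ n) (b : ℤ) :
    μ {ω | (successesBefore X m ω : ℤ) ≤ b} ≤ ν {ω | (successesBefore Y m ω : ℤ) ≤ b} := by
  induction m generalizing b with
  | zero => by_cases hb : 0 ≤ b <;> simp [hb]
  | succ m ih =>
    let i : Fin n := ⟨m, hm⟩
    calc μ {ω | (successesBefore X (i + 1) ω : ℤ) ≤ b}
        ≤ η * μ {ω | (successesBefore X i ω : ℤ) ≤ b - 1} +
            (1 - η) * μ {ω | (successesBefore X i ω : ℤ) ≤ b} :=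
          measure_successesBefore_succ_le_le_of_condSuccessProbGE μ (hbern i ▸ prob_le_one) hX i
            (hcond i) b
      _ ≤ η * ν {ω | (successesBefore Y i ω : ℤ) ≤ b - 1} +
            (1 - η) * ν {ω | (successesBefore Y i ω : ℤ) ≤ b} := by
          gcongr <;> exact ih (by omega) _
      _ = ν {ω | (successesBefore Y (i + 1) ω : ℤ) ≤ b} :=
          (measure_successesBefore_succ_le_of_iIndepFun ν hY hindep i (hbern i) b).symm

end Successes

theorem stmt_11_general {Ω Ω' : Type*} [MeasurableSpace Ω] [MeasurableSpace Ω']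
    (μ : Measure Ω) (ν : Measure Ω')
    [IsProbabilityMeasure μ] [IsProbabilityMeasure ν]
    (n : ℕ) (η : ℝ≥0∞)
    (X : Fin n → Ω → Bool) (hX : ∀ i, Measurable (X i))
    (hcond : ∀ (i : Fin n) (x : Fin n → Bool),
      0 < μ {ω | ∀ j < i, X j ω = x j} →
      η * μ {ω | ∀ j < i, X j ω = x j} ≤ μ {ω | X i ω = true ∧ ∀ j < i, X j ω = x j})
    (Y : Fin n → Ω' → Bool) (hY : ∀ i, Measurable (Y i))
    (hindep : iIndepFun Y ν)
    (hbern : ∀ i, ν {ω | Y i ω = true} = η)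
    (b : ℤ) :
    μ {ω | ((Finset.univ.filter fun i => X i ω = true).card : ℤ) ≤ b} ≤
      ν {ω | ((Finset.univ.filter fun i => Y i ω = true).card : ℤ) ≤ b} := by
  simp_rw [← successesBefore_self]
  exact measure_successesBefore_le_le_of_condSuccessProbGE μ ν hX hcond hY hindep hbern le_rfl b

/-- Stochastic dominance: if each `Xᵢ` succeeds with conditional probability at least `η`
given any history, and `Y₁,…,Y_n` are independent Bernoulli(η), then
`P(∑ Xᵢ ≤ b) ≤ P(∑ Yᵢ ≤ b)`. -/
theorem stmt_11 {Ω Ω' : Type*} [MeasurableSpace Ω] [MeasurableSpace Ω']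
    (μ : Measure Ω) (ν : Measure Ω')
    [IsProbabilityMeasure μ] [IsProbabilityMeasure ν]
    (n : ℕ) (η : ℝ≥0∞) (hη : 0 < η)
    (X : Fin n → Ω → Bool) (hX : ∀ i, Measurable (X i))
    (hcond : ∀ (i : Fin n) (x : Fin n → Bool),
      0 < μ {ω | ∀ j < i, X j ω = x j} →
      η * μ {ω | ∀ j < i, X j ω = x j} ≤ μ {ω | X i ω = true ∧ ∀ j < i, X j ω = x j})
    (Y : Fin n → Ω' → Bool) (hY : ∀ i, Measurable (Y i))
    (hindep : iIndepFun Y ν)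
    (hbern : ∀ i, ν {ω | Y i ω = true} = η)
    (b : ℤ) :
    μ {ω | ((Finset.univ.filter fun i => X i ω = true).card : ℤ) ≤ b} ≤
      ν {ω | ((Finset.univ.filter fun i => Y i ω = true).card : ℤ) ≤ b} :=
  stmt_11_general μ ν n η X hX hcond Y hY hindep hbern b
end

section
/- Given finite sets V_1, ..., V_ℓ each of cardinality at least 2ℓ, there exist pairwise disjoint sets 𝒱_1, ..., 𝒱_ℓ with 𝒱_l ⊆ V_l and |𝒱_l| ≥ |V_l|/(2ℓ) for every l ∈ [ℓ]. -/
/-!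
Give the `l`-th set `m l = ⌈|V l| / (2ℓ)⌉` elements, treating the sets in increasing order of `m`.
When `V l` is served, each of the at most `ℓ - 1` sets served before it has taken at most `m l`
elements, and `ℓ * m l ≤ |V l|` because `|V l| ≥ 2ℓ`, so `m l` unused elements of `V l` remain.
-/

open Finset

theorem exists_pairwiseDisjoint_subset_card_eq_of_sum_le {ι U : Type*} [DecidableEq ι]
    [DecidableEq U] (A : ι → Finset U) (m : ι → ℕ) (s : Finset ι)
    (h : ∀ i ∈ s, ∑ k ∈ s with m k ≤ m i, m k ≤ #(A i)) :
    ∃ W : ι → Finset U, (s : Set ι).PairwiseDisjoint W ∧ ∀ i ∈ s, W i ⊆ A i ∧ #(W i) = m i := by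
  induction s using Finset.induction_on_max_value m with
  | empty => exact ⟨fun _ => ∅, by simp, by simp⟩
  | insert a s ha hmax ih =>
    obtain ⟨W, hW, hWA⟩ := ih fun i hi => (h i (mem_insert_of_mem hi)).trans' <|
      sum_le_sum_of_subset (filter_subset_filter _ (subset_insert a s))
    -- `m a` is maximal, so the hypothesis at `a` bounds the whole sum
    have hsum : m a + ∑ k ∈ s, m k ≤ #(A a) := by
      have := h a (mem_insert_self a s)
      rwa [filter_true_of_mem (by simpa using hmax), sum_insert ha] at this
    have hused : #(s.biUnion W) ≤ ∑ k ∈ s, m k :=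
      card_biUnion_le.trans (sum_le_sum fun k hk => (hWA k hk).2.le)
    obtain ⟨Wa, hWa, hWa_card⟩ := exists_subset_card_eq
      (show m a ≤ #(A a \ s.biUnion W) by grind [le_card_sdiff])
    refine ⟨Function.update W a Wa, ?_, ?_⟩
    · rw [coe_insert]
      refine (hW.mono_on fun i hi => ?_).insert fun j hj _ => ?_
      · rw [Function.update_of_ne (ne_of_mem_of_not_mem hi ha)]
      · rw [Function.update_self, Function.update_of_ne (ne_of_mem_of_not_mem hj ha)]
        exact disjoint_of_subset_left hWa (sdiff_disjoint.mono_right (subset_biUnion_of_mem W hj))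
    · intro i hi
      rcases eq_or_ne i a with rfl | hia
      · simpa using ⟨hWa.trans sdiff_subset, hWa_card⟩
      · simpa [hia] using hWA i ((mem_insert.1 hi).resolve_left hia)

theorem mul_ceil_div_two_mul_le {n ℓ : ℕ} (h : 2 * ℓ ≤ n) : ℓ * ⌈(n : ℝ) / (2 * ℓ)⌉₊ ≤ n := by
  rcases Nat.eq_zero_or_pos ℓ with rfl | hℓ
  · simp
  have hℓ' : (0 : ℝ) < ℓ := by exact_mod_cast hℓ
  have h' : 2 * (ℓ : ℝ) ≤ n := by exact_mod_cast h
  suffices (ℓ : ℝ) * ⌈(n : ℝ) / (2 * ℓ)⌉₊ < n by exact_mod_cast this.le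
  calc (ℓ : ℝ) * ⌈(n : ℝ) / (2 * ℓ)⌉₊ < ℓ * ((n : ℝ) / (2 * ℓ) + 1) :=
        mul_lt_mul_of_pos_left (Nat.ceil_lt_add_one (by positivity)) hℓ'
    _ = n / 2 + ℓ := by field_simp
    _ ≤ n := by linarith

theorem stmt_15_general {U : Type*} [DecidableEq U]
    (ℓ : ℕ) (V : Fin ℓ → Finset U)
    (hV : ∀ l : Fin ℓ, 2 * ℓ ≤ (V l).card) :
    ∃ W : Fin ℓ → Finset U,
      (∀ l₁ l₂ : Fin ℓ, l₁ ≠ l₂ → Disjoint (W l₁) (W l₂)) ∧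
      (∀ l : Fin ℓ, W l ⊆ V l) ∧
      (∀ l : Fin ℓ, ((V l).card : ℝ) / (2 * (ℓ : ℝ)) ≤ ((W l).card : ℝ)) := by
  set m : Fin ℓ → ℕ := fun l => ⌈((V l).card : ℝ) / (2 * ℓ)⌉₊
  have hsum (l : Fin ℓ) : ∑ k with m k ≤ m l, m k ≤ #(V l) :=
    calc ∑ k with m k ≤ m l, m k ≤ #{k | m k ≤ m l} * m l := sum_le_card_nsmul _ _ _ (by simp)
      _ ≤ ℓ * m l := Nat.mul_le_mul_right _ (card_le_univ _ |>.trans_eq (Fintype.card_fin ℓ))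
      _ ≤ #(V l) := mul_ceil_div_two_mul_le (hV l)
  obtain ⟨W, hW, hWV⟩ := exists_pairwiseDisjoint_subset_card_eq_of_sum_le V m univ fun l _ => hsum l
  refine ⟨W, fun l₁ l₂ => hW (by simp) (by simp), fun l => (hWV l (mem_univ l)).1, fun l => ?_⟩
  rw [(hWV l (mem_univ l)).2]
  exact Nat.le_ceil _

/-- Distribute: given sets `V₁,…,V_ℓ` each of size at least `2ℓ`, there are pairwise
disjoint `𝒱_l ⊆ V_l` with `|𝒱_l| ≥ |V_l|/(2ℓ)`. -/
theorem stmt_15 {U : Type*} [DecidableEq U] [Fintype U]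
    (ℓ : ℕ) (hℓ : 0 < ℓ) (V : Fin ℓ → Finset U)
    (hV : ∀ l : Fin ℓ, 2 * ℓ ≤ (V l).card) :
    ∃ W : Fin ℓ → Finset U,
      (∀ l₁ l₂ : Fin ℓ, l₁ ≠ l₂ → Disjoint (W l₁) (W l₂)) ∧
      (∀ l : Fin ℓ, W l ⊆ V l) ∧
      (∀ l : Fin ℓ, ((V l).card : ℝ) / (2 * (ℓ : ℝ)) ≤ ((W l).card : ℝ)) :=
  stmt_15_general ℓ V hV
end
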